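/- With b ≥ c ≥ 1, bc > 4 and the sequences α, β as defined, let k ≥ 0. Let P_α be the set of lattice points of the region in ℝ^2 bounded by the broken line (0,0), (α(k-1),0), (α(k)/r_{k-1}, α(k-1)/r_k), (0,α(k)), (0,0) (with the sides [(0,0),(α(k-1),0)] and [(0,α(k)),(0,0)] included and the rest of the boundary excluded), and let P_β be the analogous set of lattice points with α(k), α(k-1) replaced by β(k), β(k-1). Then P_α ∖ {(α(k-1), 0)} ⊆ {(p - α(k+1), q - α(k)) : (p,q) ∈ P_β}. -/

import Mathlib

/-- `r_k`: equals `b` for odd `k` and `c` for even `k`. -/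
def rr (b c : ℕ) (k : ℤ) : ℕ := if Odd k then b else c

/-- The region `P` bounded by the broken line
`(0,0), (a',0), (a/B, a'/C), (0,a), (0,0)`, with the sides `[(0,0),(a',0)]` and
`[(0,a),(0,0)]` included and the rest of the boundary excluded.  (The simple
quadrilateral with these vertices is the union of the two triangles obtained by
cutting along its diagonal from `(0,0)` to `(a/B, a'/C)`; the excluded part of the
boundary consists of the segments from `(a',0)` to `(a/B,a'/C)` and from
`(a/B,a'/C)` to `(0,a)`, minus the endpoints `(a',0)` and `(0,a)`.) -/
noncomputable def region (B C : ℕ) (a a' : ℤ) : Set (ℝ × ℝ) :=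
  (convexHull ℝ ({(0, 0), ((a' : ℝ), 0), ((a : ℝ) / (B : ℝ), (a' : ℝ) / (C : ℝ))} : Set (ℝ × ℝ)) ∪
    convexHull ℝ ({(0, 0), ((a : ℝ) / (B : ℝ), (a' : ℝ) / (C : ℝ)), (0, (a : ℝ))} : Set (ℝ × ℝ))) \
  ((segment ℝ ((a' : ℝ), 0) ((a : ℝ) / (B : ℝ), (a' : ℝ) / (C : ℝ)) ∪
    segment ℝ ((a : ℝ) / (B : ℝ), (a' : ℝ) / (C : ℝ)) (0, (a : ℝ))) \
   ({((a' : ℝ), 0), (0, (a : ℝ))} : Set (ℝ × ℝ)))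

open Set


set_option maxHeartbeats 1600000 in
theorem core (B C a ap p q e : ℤ) (hB : 1 ≤ B) (hC : 1 ≤ C) (ha : 1 ≤ a) (hap : 1 ≤ ap)
    (hA1 : ap + 1 ≤ C*a) (hA2 : a + 1 ≤ B*ap) (he : 1 ≤ e)
    (hinv : B*C*a*ap = C*a^2 + B*ap^2 + e)
    (hce : e = B*C - B - C ∨ e = B*C - 4)
    (hp : 0 ≤ p) (hq : 0 ≤ q)
    (hcases : (a*C*q ≤ ap*B*p ∧ ap*B*p + C*(ap*B - a)*q + 1 ≤ ap^2*B)
          ∨ (ap*B*p ≤ a*C*q ∧ a*C*q + B*(a*C - ap)*p + 1 ≤ a^2*C)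
          ∨ (p = 0 ∧ q = a)) :
    ((B*(C*a-ap)+a)*C*(q+a) ≤ (C*a+ap)*B*(p+(C*a-ap)) →
       (C*a+ap)*B*(p+(C*a-ap)) + C*((C*a+ap)*B - (B*(C*a-ap)+a))*(q+a) + 1 ≤ (C*a+ap)^2*B)
    ∧ ((C*a+ap)*B*(p+(C*a-ap)) ≤ (B*(C*a-ap)+a)*C*(q+a) →
       (B*(C*a-ap)+a)*C*(q+a) + B*((B*(C*a-ap)+a)*C - (C*a+ap))*(p+(C*a-ap)) + 1 ≤ (B*(C*a-ap)+a)^2*C) := by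
  have hCBe : e ≤ B*C := by rcases hce with h|h <;> nlinarith
  have hinv_q : q*(B*C*a*ap) = q*(C*a^2 + B*ap^2 + e) := by rw [hinv]
  have hinv_a : a*(B*C*a*ap) = a*(C*a^2 + B*ap^2 + e) := by rw [hinv]
  have hinv_p : p*(B*C*a*ap) = p*(C*a^2 + B*ap^2 + e) := by rw [hinv]
  have hinv_ap : ap*(B*C*a*ap) = ap*(C*a^2 + B*ap^2 + e) := by rw [hinv]
  have hinv_Cq : (C*q)*(B*C*a*ap) = (C*q)*(C*a^2 + B*ap^2 + e) := by rw [hinv]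
  have hinv_Bp : (B*p)*(B*C*a*ap) = (B*p)*(C*a^2 + B*ap^2 + e) := by rw [hinv]
  have hbk1 : 1 ≤ B*(C*a-ap) := by nlinarith
  have hchord : (p = 0 ∧ q = a) ∨ a*p + ap*q + 1 ≤ a*ap := by
    rcases hcases with ⟨h1, h2⟩ | ⟨h1, h2⟩ | hc
    · right
      by_contra h
      push_neg at h
      have h' : a*ap ≤ a*p + ap*q := by linarith
      have m1 : a*(ap*B*p + C*(ap*B - a)*q + 1) ≤ a*(ap^2*B) :=
        mul_le_mul_of_nonneg_left h2 (by linarith)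
      have m2 : (ap*B)*(a*ap) ≤ (ap*B)*(a*p + ap*q) :=
        mul_le_mul_of_nonneg_left h' (by nlinarith)
      nlinarith [m1, m2, mul_nonneg hq (by linarith : (0:ℤ) ≤ e), hinv_q]
    · right
      by_contra h
      push_neg at h
      have h' : a*ap ≤ a*p + ap*q := by linarith
      have m1 : ap*(a*C*q + B*(a*C - ap)*p + 1) ≤ ap*(a^2*C) :=
        mul_le_mul_of_nonneg_left h2 (by linarith)
      have m2 : (a*C)*(a*ap) ≤ (a*C)*(a*p + ap*q) :=
        mul_le_mul_of_nonneg_left h' (by nlinarith)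
      nlinarith [m1, m2, mul_nonneg hp (by linarith : (0:ℤ) ≤ e), hinv_p]
    · exact Or.inl hc
  constructor
  · -- Goal (I)
    intro hdg
    rcases hcases with ⟨h1, h2⟩ | ⟨h1, h2⟩ | ⟨hp0, hqa⟩
    · rcases hchord with ⟨hp0, hqa⟩ | hch
      · exfalso; rw [hp0, hqa] at h2; nlinarith [h2, hinv_a]
      · have hch' : ap*q + 1 ≤ a*(ap - p) := by linarith [hch]
        have m3 : (C*B)*(ap*q + 1) ≤ (C*B)*(a*(ap-p)) :=
          mul_le_mul_of_nonneg_left hch' (by positivity)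
        nlinarith [h2, m3, hinv, hCBe]
    · rcases hchord with ⟨hp0, hqa⟩ | hch
      · exfalso; rw [hp0, hqa] at h2; nlinarith [h2]
      · have hq2 : C*q ≤ ap := by
          by_contra hcon
          push_neg at hcon
          have m1 : (C*a+ap)*(ap*B*p) ≤ (C*a+ap)*(a*C*q) :=
            mul_le_mul_of_nonneg_left h1 (by nlinarith)
          have m2 : ap*((B*(C*a-ap)+a)*C*(q+a)) ≤ ap*((C*a+ap)*B*(p+(C*a-ap))) :=
            mul_le_mul_of_nonneg_left hdg (by linarith)
          nlinarith [m1, m2, hinv_Cq, hinv_ap,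
            mul_pos (by linarith : (0:ℤ) < e) (by linarith : (0:ℤ) < C*q - ap)]
        have key : e*(C*q) ≤ e*ap := mul_le_mul_of_nonneg_left hq2 (by linarith)
        have hbig : C*(0:ℤ) ≤ C*((C*a+ap)*B - e*q - e*a - a) := by
          rcases hce with hrw|hrw <;> nlinarith [key, hrw]
        have hbig2 : (0:ℤ) ≤ (C*a+ap)*B - e*q - e*a - a :=
          le_of_mul_le_mul_left hbig (by linarith)
        have hch' : ap*q + 1 ≤ a*(ap - p) := by linarith [hch]
        have m3 : ((C*a+ap)*B)*(ap*q + 1) ≤ ((C*a+ap)*B)*(a*(ap-p)) :=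
          mul_le_mul_of_nonneg_left hch' (by nlinarith)
        have goal_a : a*((C*a+ap)*B*(p+(C*a-ap)) + C*((C*a+ap)*B - (B*(C*a-ap)+a))*(q+a) + 1)
            ≤ a*((C*a+ap)^2*B) := by
          nlinarith [m3, hbig2, hinv_q, hinv_a]
        exact le_of_mul_le_mul_left goal_a (by linarith)
    · exfalso
      rw [hp0, hqa] at hdg
      nlinarith [hdg, hinv, mul_nonneg (by linarith : (0:ℤ) ≤ B) (sq_nonneg (C*a - ap)),
        mul_pos (show (0:ℤ) < C by linarith) (mul_pos (show (0:ℤ) < a by linarith) (show (0:ℤ) < a by linarith))]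
  · -- Goal (II)
    intro hdg
    rcases hcases with ⟨h1, h2⟩ | ⟨h1, h2⟩ | ⟨hp0, hqa⟩
    · exfalso
      have hm : 1 ≤ B*ap*(ap - C*q) := by nlinarith [h1, h2]
      have hm2 : 1 ≤ ap - C*q := by
        by_contra hcon; push_neg at hcon
        nlinarith [hm, mul_nonneg (by nlinarith : (0:ℤ) ≤ B*ap) (by linarith : (0:ℤ) ≤ C*q - ap)]
      have m1 : (C*a+ap)*(a*C*q) ≤ (C*a+ap)*(ap*B*p) :=
        mul_le_mul_of_nonneg_left h1 (by nlinarith)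
      have m2 : ap*((C*a+ap)*B*(p+(C*a-ap))) ≤ ap*((B*(C*a-ap)+a)*C*(q+a)) :=
        mul_le_mul_of_nonneg_left hdg (by linarith)
      nlinarith [m1, m2, hinv_Cq, hinv_ap,
        mul_le_mul_of_nonneg_left hm2 (by linarith : (0:ℤ) ≤ e)]
    · have hBp : C*a*(B*p) + 1 ≤ C*a*a := by nlinarith [h1, h2]
      have hBp2 : B*p < a := by
        have h0 : (0:ℤ) ≤ C*a := by positivity
        exact lt_of_mul_lt_mul_left (show C*a*(B*p) < C*a*a by linarith) h0
      have hP' : 0 ≤ e*(a - B*p) := mul_nonneg (by linarith) (by linarith)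
      have m2 : (B*(C*a-ap)+a)*(a*C*q + B*(a*C - ap)*p + 1) ≤ (B*(C*a-ap)+a)*(a^2*C) :=
        mul_le_mul_of_nonneg_left h2 (by linarith)
      have goal_a : a*((B*(C*a-ap)+a)*C*(q+a) + B*((B*(C*a-ap)+a)*C - (C*a+ap))*(p+(C*a-ap)) + 1)
          ≤ a*((B*(C*a-ap)+a)^2*C) := by
        nlinarith [m2, hP', hinv_a, hinv_Bp, hbk1]
      exact le_of_mul_le_mul_left goal_a (by linarith)
    · rw [hp0, hqa]
      nlinarith [he, hinv]



lemma hull1_sub {B C a ap : ℝ} (hB : 0 < B) (hC : 0 < C) (ha : 0 ≤ a) (hap : 0 ≤ ap) :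
    convexHull ℝ ({((0:ℝ),(0:ℝ)), (ap,0), (a/B, ap/C)} : Set (ℝ×ℝ)) ⊆
      {z : ℝ×ℝ | 0 ≤ z.2 ∧ a*C*z.2 ≤ ap*B*z.1 ∧ ap*B*z.1 + C*(ap*B - a)*z.2 ≤ ap^2*B} := by
  apply convexHull_min
  · rintro z hz
    simp only [mem_insert_iff, mem_singleton_iff] at hz
    rcases hz with rfl|rfl|rfl
    · exact ⟨le_refl 0, by simp, by simp; positivity⟩
    · exact ⟨le_refl 0, by simp; positivity, le_of_eq (by ring)⟩
    · exact ⟨by positivity, le_of_eq (by field_simp), le_of_eq (by field_simp; ring)⟩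
  · intro z hz w hw s t hs ht hst
    obtain ⟨h1, h2, h3⟩ := hz
    obtain ⟨g1, g2, g3⟩ := hw
    have hs' : s = 1 - t := by linarith
    subst hs'
    refine ⟨?_, ?_, ?_⟩ <;>
      simp only [Prod.fst_add, Prod.snd_add, Prod.smul_fst, Prod.smul_snd, smul_eq_mul]
    · exact add_nonneg (mul_nonneg (by linarith) h1) (mul_nonneg ht g1)
    · nlinarith [mul_le_mul_of_nonneg_left h2 (by linarith : (0:ℝ) ≤ 1 - t),
        mul_le_mul_of_nonneg_left g2 ht]
    · nlinarith [mul_le_mul_of_nonneg_left h3 (by linarith : (0:ℝ) ≤ 1 - t),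
        mul_le_mul_of_nonneg_left g3 ht]

lemma hull2_sub {B C a ap : ℝ} (hB : 0 < B) (hC : 0 < C) (ha : 0 ≤ a) (hap : 0 ≤ ap) :
    convexHull ℝ ({((0:ℝ),(0:ℝ)), (a/B, ap/C), (0, a)} : Set (ℝ×ℝ)) ⊆
      {z : ℝ×ℝ | 0 ≤ z.1 ∧ ap*B*z.1 ≤ a*C*z.2 ∧ a*C*z.2 + B*(a*C - ap)*z.1 ≤ a^2*C} := by
  apply convexHull_min
  · rintro z hz
    simp only [mem_insert_iff, mem_singleton_iff] at hz
    rcases hz with rfl|rfl|rfl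
    · exact ⟨le_refl 0, by simp, by simp; positivity⟩
    · exact ⟨by positivity, le_of_eq (by field_simp), le_of_eq (by field_simp; ring)⟩
    · exact ⟨le_refl 0, by simp; positivity, le_of_eq (by ring)⟩
  · intro z hz w hw s t hs ht hst
    obtain ⟨h1, h2, h3⟩ := hz
    obtain ⟨g1, g2, g3⟩ := hw
    have hs' : s = 1 - t := by linarith
    subst hs'
    refine ⟨?_, ?_, ?_⟩ <;>
      simp only [Prod.fst_add, Prod.snd_add, Prod.smul_fst, Prod.smul_snd, smul_eq_mul]
    · exact add_nonneg (mul_nonneg (by linarith) h1) (mul_nonneg ht g1)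
    · nlinarith [mul_le_mul_of_nonneg_left h2 (by linarith : (0:ℝ) ≤ 1 - t),
        mul_le_mul_of_nonneg_left g2 ht]
    · nlinarith [mul_le_mul_of_nonneg_left h3 (by linarith : (0:ℝ) ≤ 1 - t),
        mul_le_mul_of_nonneg_left g3 ht]

lemma mem_hull1 {B C a ap : ℝ} (hB : 0 < B) (hC : 0 < C) (ha : 0 ≤ a) (hap : 0 < ap)
    {x y : ℝ} (hy : 0 ≤ y) (hd : a*C*y ≤ ap*B*x) (hl : ap*B*x + C*(ap*B - a)*y ≤ ap^2*B) :
    (x,y) ∈ convexHull ℝ ({((0:ℝ),(0:ℝ)), (ap,0), (a/B, ap/C)} : Set (ℝ×ℝ)) := by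
  set t1 : ℝ := (ap*B*x - a*C*y)/(ap^2*B) with ht1
  set t2 : ℝ := y*C/ap with ht2
  have h12 : t1 + t2 = (ap*B*x + C*(ap*B - a)*y)/(ap^2*B) := by
    rw [ht1, ht2]; field_simp; ring
  have ht1n : 0 ≤ t1 := div_nonneg (by linarith) (by positivity)
  have ht2n : 0 ≤ t2 := div_nonneg (by positivity) (by positivity)
  have ht0n : 0 ≤ 1 - t1 - t2 := by
    have : t1 + t2 ≤ 1 := by rw [h12]; exact div_le_one_of_le₀ hl (by positivity)
    linarith
  have hmem := (convex_convexHull ℝ ({((0:ℝ),(0:ℝ)), (ap,0), (a/B, ap/C)} : Set (ℝ×ℝ))).sum_mem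
    (t := (Finset.univ : Finset (Fin 3))) (w := ![1 - t1 - t2, t1, t2])
    (z := ![((0:ℝ),(0:ℝ)), (ap,0), (a/B, ap/C)])
    (by intro i _; fin_cases i <;> simp <;> linarith)
    (by simp [Fin.sum_univ_three]; ring)
    (by intro i _; fin_cases i <;> exact subset_convexHull ℝ _ (by simp))
  have hsum : (∑ i : Fin 3, (![1 - t1 - t2, t1, t2] : Fin 3 → ℝ) i •
      (![((0:ℝ),(0:ℝ)), (ap,0), (a/B, ap/C)] : Fin 3 → ℝ×ℝ) i) = (x, y) := by
    simp only [Fin.sum_univ_three, Matrix.cons_val_zero, Matrix.cons_val_one, Matrix.head_cons,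
      Matrix.cons_val_two, Matrix.tail_cons, Prod.smul_mk, Prod.mk_add_mk, Prod.ext_iff,
      smul_eq_mul]
    constructor
    · rw [ht1, ht2]; field_simp; ring
    · rw [ht2]; field_simp; ring
  rwa [hsum] at hmem

lemma mem_hull2 {B C a ap : ℝ} (hB : 0 < B) (hC : 0 < C) (ha : 0 < a) (hap : 0 ≤ ap)
    {x y : ℝ} (hx : 0 ≤ x) (hd : ap*B*x ≤ a*C*y) (hl : a*C*y + B*(a*C - ap)*x ≤ a^2*C) :
    (x,y) ∈ convexHull ℝ ({((0:ℝ),(0:ℝ)), (a/B, ap/C), (0, a)} : Set (ℝ×ℝ)) := by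
  set t1 : ℝ := x*B/a with ht1
  set t2 : ℝ := (a*C*y - ap*B*x)/(a^2*C) with ht2
  have h12 : t1 + t2 = (a*C*y + B*(a*C - ap)*x)/(a^2*C) := by
    rw [ht1, ht2]; field_simp; ring
  have ht1n : 0 ≤ t1 := div_nonneg (by positivity) (by positivity)
  have ht2n : 0 ≤ t2 := div_nonneg (by linarith) (by positivity)
  have ht0n : 0 ≤ 1 - t1 - t2 := by
    have : t1 + t2 ≤ 1 := by rw [h12]; exact div_le_one_of_le₀ hl (by positivity)
    linarith
  have hmem := (convex_convexHull ℝ ({((0:ℝ),(0:ℝ)), (a/B, ap/C), (0, a)} : Set (ℝ×ℝ))).sum_mem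
    (t := (Finset.univ : Finset (Fin 3))) (w := ![1 - t1 - t2, t1, t2])
    (z := ![((0:ℝ),(0:ℝ)), (a/B, ap/C), (0, a)])
    (by intro i _; fin_cases i <;> simp <;> linarith)
    (by simp [Fin.sum_univ_three]; ring)
    (by intro i _; fin_cases i <;> exact subset_convexHull ℝ _ (by simp))
  have hsum : (∑ i : Fin 3, (![1 - t1 - t2, t1, t2] : Fin 3 → ℝ) i •
      (![((0:ℝ),(0:ℝ)), (a/B, ap/C), (0, a)] : Fin 3 → ℝ×ℝ) i) = (x, y) := by
    simp only [Fin.sum_univ_three, Matrix.cons_val_zero, Matrix.cons_val_one, Matrix.head_cons,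
      Matrix.cons_val_two, Matrix.tail_cons, Prod.smul_mk, Prod.mk_add_mk, Prod.ext_iff,
      smul_eq_mul]
    constructor
    · rw [ht1]; field_simp; ring
    · rw [ht1, ht2]; field_simp; ring
  rwa [hsum] at hmem

lemma mem_seg1 {B C a ap : ℝ} (hB : 0 < B) (hC : 0 < C) (ha : 0 ≤ a) (hap : 0 < ap)
    {x y : ℝ} (hy : 0 ≤ y) (hd : a*C*y ≤ ap*B*x) (hl : ap*B*x + C*(ap*B - a)*y = ap^2*B) :
    (x,y) ∈ segment ℝ ((ap:ℝ), (0:ℝ)) (a/B, ap/C) := by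
  rw [segment_eq_image]
  refine ⟨y*C/ap, ⟨by positivity, ?_⟩, ?_⟩
  · rw [div_le_one hap]
    by_contra hcon
    push_neg at hcon
    nlinarith [hd, hl, mul_lt_mul_of_pos_left hcon (by positivity : (0:ℝ) < ap*B)]
  · simp only [Prod.smul_mk, Prod.mk_add_mk, Prod.ext_iff, smul_eq_mul, smul_zero,
      Prod.smul_fst, Prod.smul_snd, Prod.fst_add, Prod.snd_add]
    constructor
    · field_simp
      linear_combination -hl
    · field_simp; ring
lemma mem_seg2 {B C a ap : ℝ} (hB : 0 < B) (hC : 0 < C) (ha : 0 < a) (hap : 0 ≤ ap)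
    {x y : ℝ} (hx : 0 ≤ x) (hd : ap*B*x ≤ a*C*y) (hl : a*C*y + B*(a*C - ap)*x = a^2*C) :
    (x,y) ∈ segment ℝ ((a/B : ℝ), (ap/C:ℝ)) (0, a) := by
  rw [segment_eq_image]
  have hb1 : x*B/a ≤ 1 := by
    rw [div_le_one ha]
    by_contra hcon
    push_neg at hcon
    nlinarith [hd, hl, mul_lt_mul_of_pos_left hcon (by positivity : (0:ℝ) < a*C)]
  refine ⟨1 - x*B/a, ⟨by linarith, by linarith [show (0:ℝ) ≤ x*B/a by positivity]⟩, ?_⟩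
  · simp only [Prod.smul_mk, Prod.mk_add_mk, Prod.ext_iff, smul_eq_mul, smul_zero,
      Prod.smul_fst, Prod.smul_snd, Prod.fst_add, Prod.snd_add]
    constructor
    · field_simp; ring
    · field_simp
      linear_combination -hl

lemma seg1_line {B C a ap : ℝ} (hB : 0 < B) (hC : 0 < C)
    {z : ℝ×ℝ} (hz : z ∈ segment ℝ ((ap:ℝ), (0:ℝ)) (a/B, ap/C)) :
    ap*B*z.1 + C*(ap*B - a)*z.2 = ap^2*B := by
  obtain ⟨u, v, hu, hv, huv, rfl⟩ := hz
  have hu' : u = 1 - v := by linarith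
  subst hu'
  simp only [Prod.fst_add, Prod.snd_add, Prod.smul_fst, Prod.smul_snd, smul_eq_mul]
  field_simp
  ring

lemma seg2_line {B C a ap : ℝ} (hB : 0 < B) (hC : 0 < C)
    {z : ℝ×ℝ} (hz : z ∈ segment ℝ ((a/B : ℝ), (ap/C : ℝ)) (0, a)) :
    a*C*z.2 + B*(a*C - ap)*z.1 = a^2*C := by
  obtain ⟨u, v, hu, hv, huv, rfl⟩ := hz
  have hu' : u = 1 - v := by linarith
  subst hu'
  simp only [Prod.fst_add, Prod.snd_add, Prod.smul_fst, Prod.smul_snd, smul_eq_mul]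
  field_simp
  ring

lemma seg1_half {B C a ap : ℝ} (hB : 0 < B) (hC : 0 < C) (ha : 0 ≤ a) (hap : 0 ≤ ap)
    {z : ℝ×ℝ} (hz : z ∈ segment ℝ ((ap:ℝ), (0:ℝ)) (a/B, ap/C)) :
    a*C*z.2 ≤ ap*B*z.1 := by
  obtain ⟨u, v, hu, hv, huv, rfl⟩ := hz
  have hu' : u = 1 - v := by linarith
  subst hu'
  simp only [Prod.fst_add, Prod.snd_add, Prod.smul_fst, Prod.smul_snd, smul_eq_mul]
  have h1 : a*C*((1-v)*0 + v*(ap/C)) = v*(a*ap) := by field_simp; ring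
  have h2 : ap*B*((1-v)*ap + v*(a/B)) = (1-v)*(ap^2*B) + v*(a*ap) := by field_simp
  rw [h1, h2]
  nlinarith [mul_nonneg (by linarith : (0:ℝ) ≤ 1 - v) (by positivity : (0:ℝ) ≤ ap^2*B)]

lemma seg2_half {B C a ap : ℝ} (hB : 0 < B) (hC : 0 < C) (ha : 0 ≤ a) (hap : 0 ≤ ap)
    {z : ℝ×ℝ} (hz : z ∈ segment ℝ ((a/B : ℝ), (ap/C : ℝ)) (0, a)) :
    ap*B*z.1 ≤ a*C*z.2 := by
  obtain ⟨u, v, hu, hv, huv, rfl⟩ := hz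
  have hu' : u = 1 - v := by linarith
  subst hu'
  simp only [Prod.fst_add, Prod.snd_add, Prod.smul_fst, Prod.smul_snd, smul_eq_mul]
  have h1 : ap*B*((1-v)*(a/B) + v*0) = (1-v)*(a*ap) := by field_simp; ring
  have h2 : a*C*((1-v)*(ap/C) + v*a) = (1-v)*(a*ap) + v*(a^2*C) := by field_simp
  rw [h1, h2]
  nlinarith [mul_nonneg hv (by positivity : (0:ℝ) ≤ a^2*C)]



lemma rr_cases (b c : ℕ) (m : ℤ) :
    (rr b c m = b ∧ rr b c (m+1) = c) ∨ (rr b c m = c ∧ rr b c (m+1) = b) := by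
  rcases Int.even_or_odd m with he|ho
  · right
    constructor
    · simp [rr, Int.not_odd_iff_even.mpr he]
    · simp [rr, he.add_one]
  · left
    constructor
    · simp [rr, ho]
    · simp [rr, Int.not_odd_iff_even.mpr ho.add_one]

lemma rr_mul (b c : ℕ) (m : ℤ) : rr b c m * rr b c (m+1) = b * c := by
  rcases rr_cases b c m with ⟨h1,h2⟩|⟨h1,h2⟩ <;> rw [h1,h2] <;> ring

lemma rr_add (b c : ℕ) (m : ℤ) : rr b c m + rr b c (m+1) = b + c := by
  rcases rr_cases b c m with ⟨h1,h2⟩|⟨h1,h2⟩ <;> rw [h1,h2] <;> ring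

lemma rr_period (b c : ℕ) (m : ℤ) : rr b c (m+2) = rr b c m := by
  have h : Odd (m+2) ↔ Odd m := by
    rw [Int.odd_iff, Int.odd_iff]; omega
  simp only [rr, h]

lemma rr_neg_one (b c : ℕ) : rr b c (-1) = b := by
  simp [rr, show Odd (-1:ℤ) from ⟨-1, by ring⟩]

lemma rr_zero (b c : ℕ) : rr b c 0 = c := by
  simp [rr, show ¬ Odd (0:ℤ) by decide]

lemma rr_one (b c : ℕ) : rr b c 1 = b := by
  simp [rr, show Odd (1:ℤ) from ⟨0, by ring⟩]

section seq
variable (b c : ℕ) (α : ℤ → ℤ)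

-- forward recurrence
lemma rec' (hrec : ∀ k : ℤ, α k = (rr b c (k - 1) : ℤ) * α (k - 1) - α (k - 2)) (m : ℤ) : α (m+1) = (rr b c m : ℤ) * α m - α (m-1) := by
  have h := hrec (m+1)
  have e1 : m+1-1 = m := by ring
  have e2 : m+1-2 = m-1 := by ring
  rw [e1, e2] at h
  exact h

noncomputable def Ival (t : ℤ) : ℤ :=
  (rr b c t : ℤ) * (α t)^2 + (rr b c (t-1) : ℤ) * (α (t-1))^2 - (b:ℤ)*(c:ℤ)*(α t)*(α (t-1))

lemma inv_step (hrec : ∀ k : ℤ, α k = (rr b c (k - 1) : ℤ) * α (k - 1) - α (k - 2)) (m : ℤ) : Ival b c α (m+1) = Ival b c α m := by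
  have h1 : α (m+1) = (rr b c m : ℤ) * α m - α (m-1) := rec' b c α hrec m
  have h2 : rr b c (m+1) = rr b c (m-1) := by
    rw [show m+1 = (m-1)+2 by ring, rr_period]
  have h3 : ((b:ℤ))*(c:ℤ) = (rr b c (m-1) : ℤ) * (rr b c m : ℤ) := by
    have := rr_mul b c (m-1)
    have e : m-1+1 = m := by ring
    rw [e] at this
    exact_mod_cast (by exact_mod_cast this.symm)
  unfold Ival
  rw [show m+1-1 = m by ring, h1, h2, h3]
  ring

lemma inv_all (hrec : ∀ k : ℤ, α k = (rr b c (k - 1) : ℤ) * α (k - 1) - α (k - 2)) (n : ℕ) : Ival b c α ((n:ℤ) - 1) = Ival b c α (-1) := by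
  induction n with
  | zero => norm_num
  | succ m ih =>
    have := inv_step b c α hrec ((m:ℤ) - 1)
    rw [show (m:ℤ)-1+1 = ((m+1:ℕ):ℤ)-1 by push_cast; ring] at this
    rw [this, ih]

lemma inv_any (hrec : ∀ k : ℤ, α k = (rr b c (k - 1) : ℤ) * α (k - 1) - α (k - 2)) (m : ℤ) (hm : -1 ≤ m) : Ival b c α m = Ival b c α (-1) := by
  obtain ⟨n, hn⟩ : ∃ n:ℕ, m = (n:ℤ) - 1 := ⟨(m+1).toNat, by omega⟩
  rw [hn]; exact inv_all b c α hrec n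

end seq

section more
variable (b c : ℕ) (α β : ℤ → ℤ)

lemma rr_pos (hc : 1 ≤ c) (hcb : c ≤ b) (m : ℤ) : 1 ≤ rr b c m := by
  unfold rr; split <;> omega

set_option maxHeartbeats 800000 in
lemma alpha_pos (hc : 1 ≤ c) (hcb : c ≤ b) (hbc : 4 < b * c)
    (hrec : ∀ k : ℤ, α k = (rr b c (k - 1) : ℤ) * α (k - 1) - α (k - 2))
    (hα0 : α 0 = if 1 < c then 1 else 2) (hα1 : α (-1) = 1) :
    ∀ n : ℕ, 1 ≤ α ((n:ℤ)-2) ∧ 1 ≤ α ((n:ℤ)-1) := by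
  have hb3 : 2 ≤ b := by nlinarith
  -- value of the invariant
  have hE0 : Ival b c α (-1) ≤ -1 := by
    have h0 : Ival b c α 0 = Ival b c α (-1) := by
      have := inv_step b c α hrec (-1); norm_num at this; exact this
    rw [← h0]
    unfold Ival
    rw [show (0:ℤ)-1 = -1 by ring, rr_zero, rr_neg_one, hα1]
    by_cases hc1 : 1 < c
    · rw [hα0]; simp [hc1]
      have hbb : 3 ≤ b := by nlinarith
      have hbbz : (3:ℤ) ≤ (b:ℤ) := by exact_mod_cast hbb
      have hccz : (2:ℤ) ≤ (c:ℤ) := by exact_mod_cast hc1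
      push_cast
      nlinarith [mul_le_mul_of_nonneg_left hccz (show (0:ℤ) ≤ (b:ℤ)-1 by omega), hbbz]
    · have hc' : c = 1 := by omega
      rw [hα0]; simp [hc1, hc']
      have : 5 ≤ b := by subst hc'; omega
      push_cast
      nlinarith [this]
  intro n
  induction n with
  | zero =>
    norm_num
    refine ⟨?_, by rw [hα1]⟩
    have h := hrec 0
    rw [show (0:ℤ)-1 = -1 by ring, show (0:ℤ)-2 = -2 by ring, rr_neg_one, hα1] at h
    by_cases hc1 : 1 < c
    · rw [hα0] at h; simp [hc1] at h; omega
    · have hc' : c = 1 := by omega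
      have hb5 : 5 ≤ b := by subst hc'; omega
      rw [hα0] at h; simp [hc1] at h; omega
  | succ m ih =>
    obtain ⟨h2, h1⟩ := ih
    have e0 : ((m+1:ℕ):ℤ) - 2 = (m:ℤ) - 1 := by push_cast; ring
    have e0' : ((m+1:ℕ):ℤ) - 1 = (m:ℤ) := by push_cast; ring
    rw [e0, e0']
    refine ⟨h1, ?_⟩
    -- the recurrence at m
    have e1 : α ((m:ℤ)) = (rr b c ((m:ℤ)-1) : ℤ) * α ((m:ℤ)-1) - α ((m:ℤ)-2) := by
      have h := rec' b c α hrec ((m:ℤ)-1)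
      rw [sub_add_cancel, show (m:ℤ)-1-1 = (m:ℤ)-2 by ring] at h
      exact h
    have e2 : (b:ℤ)*(c:ℤ) = (rr b c ((m:ℤ)-2) : ℤ) * (rr b c ((m:ℤ)-1) : ℤ) := by
      have := rr_mul b c ((m:ℤ)-2)
      rw [show (m:ℤ)-2+1 = (m:ℤ)-1 by ring] at this
      exact_mod_cast this.symm
    have hIv : Ival b c α ((m:ℤ)-1) ≤ -1 := by
      rw [inv_any b c α hrec ((m:ℤ)-1) (by omega)]; exact hE0
    have hIvx : (rr b c ((m:ℤ)-1) : ℤ) * (α ((m:ℤ)-1))^2 + (rr b c ((m:ℤ)-2) : ℤ) * (α ((m:ℤ)-2))^2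
        - (b:ℤ)*(c:ℤ)*(α ((m:ℤ)-1))*(α ((m:ℤ)-2)) ≤ -1 := by
      have : Ival b c α ((m:ℤ)-1) = (rr b c ((m:ℤ)-1) : ℤ) * (α ((m:ℤ)-1))^2
          + (rr b c ((m:ℤ)-2) : ℤ) * (α ((m:ℤ)-2))^2
          - (b:ℤ)*(c:ℤ)*(α ((m:ℤ)-1))*(α ((m:ℤ)-2)) := by
        unfold Ival
        rw [show (m:ℤ)-1-1 = (m:ℤ)-2 by ring]
      rw [← this]; exact hIv
    have t1 : (rr b c ((m:ℤ)-2):ℤ) * α ((m:ℤ)-2) * α ((m:ℤ))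
        = (rr b c ((m:ℤ)-1):ℤ) * (α ((m:ℤ)-1))^2
          - ((rr b c ((m:ℤ)-1) : ℤ) * (α ((m:ℤ)-1))^2 + (rr b c ((m:ℤ)-2) : ℤ) * (α ((m:ℤ)-2))^2
            - (b:ℤ)*(c:ℤ)*(α ((m:ℤ)-1))*(α ((m:ℤ)-2))) := by
      rw [e1]
      linear_combination (-(α ((m:ℤ)-1) * α ((m:ℤ)-2))) * e2
    have hR : (1:ℤ) ≤ (rr b c ((m:ℤ)-1) : ℤ) := by exact_mod_cast rr_pos b c hc hcb ((m:ℤ)-1)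
    have hr'' : (1:ℤ) ≤ (rr b c ((m:ℤ)-2) : ℤ) := by exact_mod_cast rr_pos b c hc hcb ((m:ℤ)-2)
    have hsq : (1:ℤ) ≤ (α ((m:ℤ)-1))^2 := by nlinarith
    have hRsq : (1:ℤ) ≤ (rr b c ((m:ℤ)-1):ℤ) * (α ((m:ℤ)-1))^2 := by
      nlinarith [mul_le_mul_of_nonneg_left hsq (show (0:ℤ) ≤ (rr b c ((m:ℤ)-1):ℤ) by linarith)]
    have hprod : 2 ≤ (rr b c ((m:ℤ)-2):ℤ) * α ((m:ℤ)-2) * α ((m:ℤ)) := by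
      rw [t1]
      linarith [hIvx, hRsq]
    have hpos2 : (1:ℤ) ≤ (rr b c ((m:ℤ)-2):ℤ) * α ((m:ℤ)-2) := by nlinarith
    by_contra hcon
    push_neg at hcon
    nlinarith [hprod, hpos2, mul_nonneg (by linarith : (0:ℤ) ≤ (rr b c ((m:ℤ)-2):ℤ) * α ((m:ℤ)-2)) (by omega : (0:ℤ) ≤ 1 - α ((m:ℤ)))]

lemma beta_eq (hc : 1 ≤ c)
    (hrecα : ∀ k : ℤ, α k = (rr b c (k - 1) : ℤ) * α (k - 1) - α (k - 2))
    (hrecβ : ∀ k : ℤ, β k = (rr b c (k - 1) : ℤ) * β (k - 1) - β (k - 2))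
    (hα0 : α 0 = if 1 < c then 1 else 2) (hα1 : α (-1) = 1)
    (hβ0 : β 0 = if 1 < c then ((c : ℤ) - 1) * b + 1 else (b : ℤ) + 2)
    (hβ1 : β (-1) = if 1 < c then (c : ℤ) + 1 else 3) :
    ∀ n : ℕ, β ((n:ℤ)-1) = α ((n:ℤ)+1) + 2*α ((n:ℤ)-1) ∧ β (n:ℤ) = α ((n:ℤ)+2) + 2*α (n:ℤ) := by
  have hα1' : α 1 = (c:ℤ) * α 0 - 1 := by
    have h := rec' b c α hrecα 0
    rw [rr_zero] at h; norm_num [hα1] at h; exact h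
  have hα2 : α 2 = (b:ℤ) * α 1 - α 0 := by
    have h := rec' b c α hrecα 1
    rw [rr_one] at h; norm_num at h; exact h
  intro n
  induction n with
  | zero =>
    norm_num
    constructor
    · by_cases hc1 : 1 < c
      · rw [hβ1, hα1', hα0, hα1]; simp [hc1]; ring
      · have hc' : c = 1 := by omega
        subst hc'
        rw [hβ1, hα1', hα0, hα1]; norm_num
    · by_cases hc1 : 1 < c
      · rw [hβ0, hα2, hα1', hα0]; simp [hc1]; ring
      · have hc' : c = 1 := by omega
        subst hc'
        rw [hβ0, hα2, hα1', hα0]; norm_num; ring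
  | succ m ih =>
    obtain ⟨hA, hB⟩ := ih
    have e0 : ((m+1:ℕ):ℤ) - 1 = (m:ℤ) := by push_cast; ring
    have e0' : ((m+1:ℕ):ℤ) = (m:ℤ)+1 := by push_cast; ring
    rw [e0, e0']
    refine ⟨by rw [show (m:ℤ)+1+1 = (m:ℤ)+2 by ring]; exact hB, ?_⟩
    have r1 : β ((m:ℤ)+1) = (rr b c (m:ℤ) : ℤ) * β (m:ℤ) - β ((m:ℤ)-1) := rec' b c β hrecβ (m:ℤ)
    have r2 : α ((m:ℤ)+3) = (rr b c ((m:ℤ)+2) : ℤ) * α ((m:ℤ)+2) - α ((m:ℤ)+1) := by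
      have h := rec' b c α hrecα ((m:ℤ)+2)
      rw [show (m:ℤ)+2+1 = (m:ℤ)+3 by ring, show (m:ℤ)+2-1 = (m:ℤ)+1 by ring] at h
      exact h
    have r3 : rr b c ((m:ℤ)+2) = rr b c (m:ℤ) := rr_period b c (m:ℤ)
    have r4 : α ((m:ℤ)+1) = (rr b c (m:ℤ) : ℤ) * α (m:ℤ) - α ((m:ℤ)-1) := rec' b c α hrecα (m:ℤ)
    rw [show (m:ℤ)+1+2 = (m:ℤ)+3 by ring, r1, r2, r3, hA, hB]
    linarith [r4]


lemma E0_val (b c : ℕ) (α : ℤ → ℤ) (hc : 1 ≤ c)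
    (hrec : ∀ k : ℤ, α k = (rr b c (k - 1) : ℤ) * α (k - 1) - α (k - 2))
    (hα0 : α 0 = if 1 < c then 1 else 2) (hα1 : α (-1) = 1) :
    Ival b c α (-1) = if 1 < c then ((b:ℤ) + c - b*c) else (4:ℤ) - (b:ℤ) := by
  have h0 : Ival b c α 0 = Ival b c α (-1) := by
    have := inv_step b c α hrec (-1); norm_num at this; exact this
  rw [← h0]
  unfold Ival
  rw [show (0:ℤ)-1 = -1 by ring, rr_zero, rr_neg_one, hα1]
  by_cases hc1 : 1 < c
  · rw [hα0]; simp [hc1]; push_cast; ring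
  · have hc' : c = 1 := by omega
    subst hc'
    rw [hα0]; simp [hc1]; push_cast; ring

set_option maxHeartbeats 1600000 in
lemma main_geom (B C : ℕ) (a ap A1 e p q : ℤ)
    (hB : 1 ≤ (B:ℤ)) (hC : 1 ≤ (C:ℤ)) (ha : 1 ≤ a) (hap : 1 ≤ ap)
    (hA1eq : A1 = (C:ℤ)*a - ap)
    (hA1ineq : ap + 1 ≤ (C:ℤ)*a) (hA2 : a + 1 ≤ (B:ℤ)*ap)
    (he : 1 ≤ e) (hinv : (B:ℤ)*(C:ℤ)*a*ap = (C:ℤ)*a^2+(B:ℤ)*ap^2+e)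
    (hce : e = (B:ℤ)*(C:ℤ) - (B:ℤ) - (C:ℤ) ∨ e = (B:ℤ)*(C:ℤ) - 4)
    (hmem : (((p:ℤ):ℝ),((q:ℤ):ℝ)) ∈ region B C a ap)
    (hne : ¬(p = ap ∧ q = 0)) :
    (((p + A1 : ℤ):ℝ), ((q + a : ℤ):ℝ)) ∈
      region B C ((B:ℤ)*((C:ℤ)*a - ap) + a) ((C:ℤ)*a + ap) := by
  obtain ⟨hun, hnb⟩ := hmem
  have hBR : (0:ℝ) < (B:ℝ) := by exact_mod_cast lt_of_lt_of_le zero_lt_one hB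
  have hCR : (0:ℝ) < (C:ℝ) := by exact_mod_cast lt_of_lt_of_le zero_lt_one hC
  have haR : (0:ℝ) ≤ ((a:ℤ):ℝ) := by exact_mod_cast (by linarith : (0:ℤ) ≤ a)
  have hapR : (0:ℝ) ≤ ((ap:ℤ):ℝ) := by exact_mod_cast (by linarith : (0:ℤ) ≤ ap)
  have hapR' : (0:ℝ) < ((ap:ℤ):ℝ) := by exact_mod_cast (by linarith : (0:ℤ) < ap)
  have haR' : (0:ℝ) < ((a:ℤ):ℝ) := by exact_mod_cast (by linarith : (0:ℤ) < a)
  -- extract the integer case facts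
  have hext : 0 ≤ p ∧ 0 ≤ q ∧
      ((a*(C:ℤ)*q ≤ ap*(B:ℤ)*p ∧ ap*(B:ℤ)*p + (C:ℤ)*(ap*(B:ℤ) - a)*q + 1 ≤ ap^2*(B:ℤ))
        ∨ (ap*(B:ℤ)*p ≤ a*(C:ℤ)*q ∧ a*(C:ℤ)*q + (B:ℤ)*(a*(C:ℤ) - ap)*p + 1 ≤ a^2*(C:ℤ))
        ∨ (p = 0 ∧ q = a)) := by
    rcases hun with h|h
    · have h' := hull1_sub hBR hCR haR hapR h
      have hy : (0:ℝ) ≤ ((q:ℤ):ℝ) := h'.1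
      have hd : ((a:ℤ):ℝ)*(C:ℝ)*((q:ℤ):ℝ) ≤ ((ap:ℤ):ℝ)*(B:ℝ)*((p:ℤ):ℝ) := h'.2.1
      have hl : ((ap:ℤ):ℝ)*(B:ℝ)*((p:ℤ):ℝ) + (C:ℝ)*(((ap:ℤ):ℝ)*(B:ℝ) - ((a:ℤ):ℝ))*((q:ℤ):ℝ)
          ≤ ((ap:ℤ):ℝ)^2*(B:ℝ) := h'.2.2
      have hq0 : 0 ≤ q := by exact_mod_cast hy
      have hdZ : a*(C:ℤ)*q ≤ ap*(B:ℤ)*p := by exact_mod_cast hd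
      have hlZ : ap*(B:ℤ)*p + (C:ℤ)*(ap*(B:ℤ) - a)*q ≤ ap^2*(B:ℤ) := by exact_mod_cast hl
      have hp0 : 0 ≤ p := by
        by_contra hcon
        push_neg at hcon
        have h1 : (0:ℤ) ≤ a*(C:ℤ)*q := by positivity
        have h2 : ap*(B:ℤ)*p ≤ ap*(B:ℤ)*(-1) :=
          mul_le_mul_of_nonneg_left (by omega) (by positivity)
        nlinarith
      by_cases heq : ap*(B:ℤ)*p + (C:ℤ)*(ap*(B:ℤ) - a)*q = ap^2*(B:ℤ)
      · have heqR : ((ap:ℤ):ℝ)*(B:ℝ)*((p:ℤ):ℝ) + (C:ℝ)*(((ap:ℤ):ℝ)*(B:ℝ) - ((a:ℤ):ℝ))*((q:ℤ):ℝ)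
            = ((ap:ℤ):ℝ)^2*(B:ℝ) := by exact_mod_cast heq
        have hseg := mem_seg1 hBR hCR haR hapR' hy hd heqR
        have hcor : (((p:ℤ):ℝ),((q:ℤ):ℝ)) ∈ ({(((ap:ℤ):ℝ),(0:ℝ)),((0:ℝ),((a:ℤ):ℝ))} : Set (ℝ×ℝ)) := by
          by_contra hcc
          exact hnb ⟨Or.inl hseg, hcc⟩
        simp only [mem_insert_iff, mem_singleton_iff, Prod.mk.injEq] at hcor
        rcases hcor with ⟨h1,h2⟩|⟨h1,h2⟩
        · exact absurd ⟨by exact_mod_cast h1, by exact_mod_cast h2⟩ hne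
        · exact ⟨hp0, hq0, Or.inr (Or.inr ⟨by exact_mod_cast h1, by exact_mod_cast h2⟩)⟩
      · exact ⟨hp0, hq0, Or.inl ⟨hdZ, by omega⟩⟩
    · have h' := hull2_sub hBR hCR haR hapR h
      have hx : (0:ℝ) ≤ ((p:ℤ):ℝ) := h'.1
      have hd : ((ap:ℤ):ℝ)*(B:ℝ)*((p:ℤ):ℝ) ≤ ((a:ℤ):ℝ)*(C:ℝ)*((q:ℤ):ℝ) := h'.2.1
      have hl : ((a:ℤ):ℝ)*(C:ℝ)*((q:ℤ):ℝ) + (B:ℝ)*(((a:ℤ):ℝ)*(C:ℝ) - ((ap:ℤ):ℝ))*((p:ℤ):ℝ)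
          ≤ ((a:ℤ):ℝ)^2*(C:ℝ) := h'.2.2
      have hp0 : 0 ≤ p := by exact_mod_cast hx
      have hdZ : ap*(B:ℤ)*p ≤ a*(C:ℤ)*q := by exact_mod_cast hd
      have hlZ : a*(C:ℤ)*q + (B:ℤ)*(a*(C:ℤ) - ap)*p ≤ a^2*(C:ℤ) := by exact_mod_cast hl
      have hq0 : 0 ≤ q := by
        by_contra hcon
        push_neg at hcon
        have h1 : (0:ℤ) ≤ ap*(B:ℤ)*p := by positivity
        have h2 : a*(C:ℤ)*q ≤ a*(C:ℤ)*(-1) :=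
          mul_le_mul_of_nonneg_left (by omega) (by positivity)
        nlinarith
      by_cases heq : a*(C:ℤ)*q + (B:ℤ)*(a*(C:ℤ) - ap)*p = a^2*(C:ℤ)
      · have heqR : ((a:ℤ):ℝ)*(C:ℝ)*((q:ℤ):ℝ) + (B:ℝ)*(((a:ℤ):ℝ)*(C:ℝ) - ((ap:ℤ):ℝ))*((p:ℤ):ℝ)
            = ((a:ℤ):ℝ)^2*(C:ℝ) := by exact_mod_cast heq
        have hseg := mem_seg2 hBR hCR haR' hapR hx hd heqR
        have hcor : (((p:ℤ):ℝ),((q:ℤ):ℝ)) ∈ ({(((ap:ℤ):ℝ),(0:ℝ)),((0:ℝ),((a:ℤ):ℝ))} : Set (ℝ×ℝ)) := by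
          by_contra hcc
          exact hnb ⟨Or.inr hseg, hcc⟩
        simp only [mem_insert_iff, mem_singleton_iff, Prod.mk.injEq] at hcor
        rcases hcor with ⟨h1,h2⟩|⟨h1,h2⟩
        · exact absurd ⟨by exact_mod_cast h1, by exact_mod_cast h2⟩ hne
        · exact ⟨hp0, hq0, Or.inr (Or.inr ⟨by exact_mod_cast h1, by exact_mod_cast h2⟩)⟩
      · exact ⟨hp0, hq0, Or.inr (Or.inl ⟨hdZ, by omega⟩)⟩
  obtain ⟨hp0, hq0, hcs⟩ := hext
  obtain ⟨concl1, concl2⟩ := core (B:ℤ) (C:ℤ) a ap p q e hB hC ha hap hA1ineq hA2 he hinv hce hp0 hq0 hcs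
  have hbk1 : (1:ℤ) ≤ (B:ℤ)*((C:ℤ)*a - ap) + a := by nlinarith
  have hbp1 : (1:ℤ) ≤ (C:ℤ)*a + ap := by linarith
  have hbkR : (0:ℝ) ≤ (((B:ℤ)*((C:ℤ)*a - ap) + a : ℤ):ℝ) := by
    exact_mod_cast (by linarith : (0:ℤ) ≤ (B:ℤ)*((C:ℤ)*a - ap) + a)
  have hbkR' : (0:ℝ) < (((B:ℤ)*((C:ℤ)*a - ap) + a : ℤ):ℝ) := by
    exact_mod_cast (by linarith : (0:ℤ) < (B:ℤ)*((C:ℤ)*a - ap) + a)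
  have hbpR : (0:ℝ) ≤ (((C:ℤ)*a + ap : ℤ):ℝ) := by
    exact_mod_cast (by linarith : (0:ℤ) ≤ (C:ℤ)*a + ap)
  have hbpR' : (0:ℝ) < (((C:ℤ)*a + ap : ℤ):ℝ) := by
    exact_mod_cast (by linarith : (0:ℤ) < (C:ℤ)*a + ap)
  rw [hA1eq]
  constructor
  · rcases le_or_gt (((B:ℤ)*((C:ℤ)*a - ap) + a)*(C:ℤ)*(q+a)) (((C:ℤ)*a + ap)*(B:ℤ)*(p+((C:ℤ)*a-ap))) with hge|hlt
    · left
      have hyR : (0:ℝ) ≤ ((q + a : ℤ):ℝ) := by exact_mod_cast (by linarith : (0:ℤ) ≤ q + a)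
      have hdR : (((B:ℤ)*((C:ℤ)*a - ap) + a : ℤ):ℝ)*(C:ℝ)*((q+a:ℤ):ℝ)
          ≤ (((C:ℤ)*a + ap : ℤ):ℝ)*(B:ℝ)*((p+((C:ℤ)*a-ap):ℤ):ℝ) := by exact_mod_cast hge
      have hlZ := concl1 hge
      have hlR : (((C:ℤ)*a + ap : ℤ):ℝ)*(B:ℝ)*((p+((C:ℤ)*a-ap):ℤ):ℝ)
          + (C:ℝ)*((((C:ℤ)*a + ap : ℤ):ℝ)*(B:ℝ) - (((B:ℤ)*((C:ℤ)*a - ap) + a : ℤ):ℝ))*((q+a:ℤ):ℝ)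
          ≤ (((C:ℤ)*a + ap : ℤ):ℝ)^2*(B:ℝ) := by
        exact_mod_cast (by linarith :
          ((C:ℤ)*a + ap)*(B:ℤ)*(p+((C:ℤ)*a-ap))
          + (C:ℤ)*(((C:ℤ)*a + ap)*(B:ℤ) - ((B:ℤ)*((C:ℤ)*a - ap) + a))*(q+a)
          ≤ ((C:ℤ)*a + ap)^2*(B:ℤ))
      exact mem_hull1 hBR hCR hbkR hbpR' hyR hdR hlR
    · right
      have hxR : (0:ℝ) ≤ ((p + ((C:ℤ)*a-ap) : ℤ):ℝ) := by
        exact_mod_cast (by linarith : (0:ℤ) ≤ p + ((C:ℤ)*a-ap))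
      have hdR : (((C:ℤ)*a + ap : ℤ):ℝ)*(B:ℝ)*((p+((C:ℤ)*a-ap):ℤ):ℝ)
          ≤ (((B:ℤ)*((C:ℤ)*a - ap) + a : ℤ):ℝ)*(C:ℝ)*((q+a:ℤ):ℝ) := by
        exact_mod_cast hlt.le
      have hlZ := concl2 hlt.le
      have hlR : (((B:ℤ)*((C:ℤ)*a - ap) + a : ℤ):ℝ)*(C:ℝ)*((q+a:ℤ):ℝ)
          + (B:ℝ)*((((B:ℤ)*((C:ℤ)*a - ap) + a : ℤ):ℝ)*(C:ℝ) - (((C:ℤ)*a + ap : ℤ):ℝ))*((p+((C:ℤ)*a-ap):ℤ):ℝ)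
          ≤ (((B:ℤ)*((C:ℤ)*a - ap) + a : ℤ):ℝ)^2*(C:ℝ) := by
        exact_mod_cast (by linarith :
          ((B:ℤ)*((C:ℤ)*a - ap) + a)*(C:ℤ)*(q+a)
          + (B:ℤ)*(((B:ℤ)*((C:ℤ)*a - ap) + a)*(C:ℤ) - ((C:ℤ)*a + ap))*(p+((C:ℤ)*a-ap))
          ≤ ((B:ℤ)*((C:ℤ)*a - ap) + a)^2*(C:ℤ))
      exact mem_hull2 hBR hCR hbkR' hbpR hxR hdR hlR
  · rintro ⟨hseg, -⟩
    rcases hseg with hs|hs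
    · have hlineR : (((C:ℤ)*a + ap : ℤ):ℝ)*(B:ℝ)*((p+((C:ℤ)*a-ap):ℤ):ℝ)
          + (C:ℝ)*((((C:ℤ)*a + ap : ℤ):ℝ)*(B:ℝ) - (((B:ℤ)*((C:ℤ)*a - ap) + a : ℤ):ℝ))*((q+a:ℤ):ℝ)
          = (((C:ℤ)*a + ap : ℤ):ℝ)^2*(B:ℝ) := seg1_line hBR hCR hs
      have hhalfR : (((B:ℤ)*((C:ℤ)*a - ap) + a : ℤ):ℝ)*(C:ℝ)*((q+a:ℤ):ℝ)
          ≤ (((C:ℤ)*a + ap : ℤ):ℝ)*(B:ℝ)*((p+((C:ℤ)*a-ap):ℤ):ℝ) := seg1_half hBR hCR hbkR hbpR hs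
      have hlineZ : ((C:ℤ)*a + ap)*(B:ℤ)*(p+((C:ℤ)*a-ap))
          + (C:ℤ)*(((C:ℤ)*a + ap)*(B:ℤ) - ((B:ℤ)*((C:ℤ)*a - ap) + a))*(q+a)
          = ((C:ℤ)*a + ap)^2*(B:ℤ) := by exact_mod_cast hlineR
      have hdgZ : ((B:ℤ)*((C:ℤ)*a - ap) + a)*(C:ℤ)*(q+a)
          ≤ ((C:ℤ)*a + ap)*(B:ℤ)*(p+((C:ℤ)*a-ap)) := by exact_mod_cast hhalfR
      have := concl1 hdgZ
      omega
    · have hlineR : (((B:ℤ)*((C:ℤ)*a - ap) + a : ℤ):ℝ)*(C:ℝ)*((q+a:ℤ):ℝ)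
          + (B:ℝ)*((((B:ℤ)*((C:ℤ)*a - ap) + a : ℤ):ℝ)*(C:ℝ) - (((C:ℤ)*a + ap : ℤ):ℝ))*((p+((C:ℤ)*a-ap):ℤ):ℝ)
          = (((B:ℤ)*((C:ℤ)*a - ap) + a : ℤ):ℝ)^2*(C:ℝ) := seg2_line hBR hCR hs
      have hhalfR : (((C:ℤ)*a + ap : ℤ):ℝ)*(B:ℝ)*((p+((C:ℤ)*a-ap):ℤ):ℝ)
          ≤ (((B:ℤ)*((C:ℤ)*a - ap) + a : ℤ):ℝ)*(C:ℝ)*((q+a:ℤ):ℝ) := seg2_half hBR hCR hbkR hbpR hs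
      have hlineZ : ((B:ℤ)*((C:ℤ)*a - ap) + a)*(C:ℤ)*(q+a)
          + (B:ℤ)*(((B:ℤ)*((C:ℤ)*a - ap) + a)*(C:ℤ) - ((C:ℤ)*a + ap))*(p+((C:ℤ)*a-ap))
          = ((B:ℤ)*((C:ℤ)*a - ap) + a)^2*(C:ℤ) := by exact_mod_cast hlineR
      have hdgZ : ((C:ℤ)*a + ap)*(B:ℤ)*(p+((C:ℤ)*a-ap))
          ≤ ((B:ℤ)*((C:ℤ)*a - ap) + a)*(C:ℤ)*(q+a) := by exact_mod_cast hhalfR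
      have := concl2 hdgZ
      omega

set_option maxHeartbeats 1600000 in
/-- With `b ≥ c ≥ 1`, `bc > 4` and the sequences `α, β` as
defined, for `k ≥ 0` the set of lattice points of the region bounded by the broken
line `(0,0), (α(k-1),0), (α(k)/r_{k-1}, α(k-1)/r_k), (0,α(k)), (0,0)`, minus the
point `(α(k-1),0)`, is contained in the translate by `(-α(k+1), -α(k))` of the set
of lattice points of the analogous region for `β`. -/
theorem statement16 (b c : ℕ) (hc : 1 ≤ c) (hcb : c ≤ b) (hbc : 4 < b * c)
    (α β γ : ℤ → ℤ)
    (hαrec : ∀ k : ℤ, α k = (rr b c (k - 1) : ℤ) * α (k - 1) - α (k - 2))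
    (hβrec : ∀ k : ℤ, β k = (rr b c (k - 1) : ℤ) * β (k - 1) - β (k - 2))
    (hγrec : ∀ k : ℤ, γ k = (rr b c (k - 1) : ℤ) * γ (k - 1) - γ (k - 2))
    (hα0 : α 0 = if 1 < c then 1 else 2)
    (hα1 : α (-1) = 1)
    (hβ0 : β 0 = if 1 < c then ((c : ℤ) - 1) * b + 1 else (b : ℤ) + 2)
    (hβ1 : β (-1) = if 1 < c then (c : ℤ) + 1 else 3)
    (hγ0 : γ 0 = if 1 < c then (b : ℤ) + 1 else (b : ℤ) + 2)
    (hγ1 : γ (-1) = if 1 < c then ((b : ℤ) - 1) * c + 1 else (b : ℤ) - 1)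
    (k : ℤ) (hk : 0 ≤ k) :
    {pq : ℤ × ℤ | ((pq.1 : ℝ), (pq.2 : ℝ))
        ∈ region (rr b c (k - 1)) (rr b c k) (α k) (α (k - 1))} \ {(α (k - 1), 0)}
      ⊆ (fun pq : ℤ × ℤ => (pq.1 - α (k + 1), pq.2 - α k)) ''
          {pq : ℤ × ℤ | ((pq.1 : ℝ), (pq.2 : ℝ))
              ∈ region (rr b c (k - 1)) (rr b c k) (β k) (β (k - 1))} := by
  intro pq hpq
  obtain ⟨hmem, hne⟩ := hpq
  simp only [Set.mem_setOf_eq] at hmem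
  simp only [Set.mem_singleton_iff] at hne
  -- positivity of α
  have hposall : ∀ m : ℤ, -2 ≤ m → 1 ≤ α m := by
    intro m hm
    obtain ⟨n, hn⟩ : ∃ n:ℕ, m = (n:ℤ) - 2 := ⟨(m+2).toNat, by omega⟩
    rw [hn]; exact (alpha_pos b c α hc hcb hbc hαrec hα0 hα1 n).1
  have ha1 : 1 ≤ α k := hposall k (by omega)
  have hap1 : 1 ≤ α (k-1) := hposall (k-1) (by omega)
  have hA11 : 1 ≤ α (k+1) := hposall (k+1) (by omega)
  have ham2 : 1 ≤ α (k-2) := hposall (k-2) (by omega)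
  have hBz : (1:ℤ) ≤ ((rr b c (k-1) : ℕ):ℤ) := by exact_mod_cast rr_pos b c hc hcb (k-1)
  have hCz : (1:ℤ) ≤ ((rr b c k : ℕ):ℤ) := by exact_mod_cast rr_pos b c hc hcb k
  have hA1eq : α (k+1) = ((rr b c k : ℕ):ℤ) * α k - α (k-1) := rec' b c α hαrec k
  have hA2 : α k + 1 ≤ ((rr b c (k-1) : ℕ):ℤ) * α (k-1) := by
    have h := hαrec k
    linarith [h, ham2]
  have hA1ineq : α (k-1) + 1 ≤ ((rr b c k : ℕ):ℤ) * α k := by linarith [hA1eq, hA11]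
  -- invariant and e
  have hBCm : ((rr b c (k-1) : ℕ):ℤ)*((rr b c k : ℕ):ℤ) = (b:ℤ)*c := by
    have h := rr_mul b c (k-1)
    rw [show k-1+1 = k by ring] at h
    exact_mod_cast h
  have hBCa : ((rr b c (k-1) : ℕ):ℤ)+((rr b c k : ℕ):ℤ) = (b:ℤ)+c := by
    have h := rr_add b c (k-1)
    rw [show k-1+1 = k by ring] at h
    exact_mod_cast h
  have hIv : Ival b c α k = Ival b c α (-1) := inv_any b c α hαrec k (by omega)
  have hE0 := E0_val b c α hc hαrec hα0 hα1
  obtain ⟨e, he, hce, heval⟩ : ∃ e:ℤ, 1 ≤ e ∧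
      (e = ((rr b c (k-1) : ℕ):ℤ)*((rr b c k : ℕ):ℤ) - ((rr b c (k-1) : ℕ):ℤ) - ((rr b c k : ℕ):ℤ)
        ∨ e = ((rr b c (k-1) : ℕ):ℤ)*((rr b c k : ℕ):ℤ) - 4)
      ∧ Ival b c α (-1) = -e := by
    by_cases hc1 : 1 < c
    · refine ⟨(b:ℤ)*c - b - c, ?_, Or.inl (by linarith [hBCm, hBCa]), ?_⟩
      · have hb3 : 3 ≤ b := by nlinarith
        have hbz : (3:ℤ) ≤ (b:ℤ) := by exact_mod_cast hb3
        have hcz : (2:ℤ) ≤ (c:ℤ) := by exact_mod_cast hc1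
        nlinarith [mul_le_mul_of_nonneg_left hcz (show (0:ℤ) ≤ (b:ℤ)-1 by omega)]
      · rw [hE0]; simp [hc1]; ring
    · have hc' : c = 1 := by omega
      have hb5 : 5 ≤ b := by subst hc'; omega
      refine ⟨(b:ℤ) - 4, ?_, Or.inr ?_, ?_⟩
      · have : (5:ℤ) ≤ (b:ℤ) := by exact_mod_cast hb5
        linarith
      · have hcz : (c:ℤ) = 1 := by exact_mod_cast hc'
        have : (b:ℤ)*(c:ℤ) = (b:ℤ) := by rw [hcz]; ring
        linarith [hBCm, this]
      · rw [hE0]; simp [hc1]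
  have hinv : ((rr b c (k-1) : ℕ):ℤ)*((rr b c k : ℕ):ℤ)*(α k)*(α (k-1))
      = ((rr b c k : ℕ):ℤ)*(α k)^2 + ((rr b c (k-1) : ℕ):ℤ)*(α (k-1))^2 + e := by
    have hIvx : Ival b c α k = ((rr b c k : ℕ):ℤ)*(α k)^2 + ((rr b c (k-1) : ℕ):ℤ)*(α (k-1))^2
        - (b:ℤ)*(c:ℤ)*(α k)*(α (k-1)) := rfl
    have hmm : ((rr b c (k-1) : ℕ):ℤ)*((rr b c k : ℕ):ℤ)*((α k)*(α (k-1)))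
        = (b:ℤ)*c*((α k)*(α (k-1))) := by rw [hBCm]
    linarith [hIv, heval, hIvx, hmm]
  -- beta values
  have hbeta : ∀ m : ℤ, -1 ≤ m → β m = α (m+2) + 2*α m := by
    intro m hm
    obtain ⟨n, hn⟩ : ∃ n:ℕ, m = (n:ℤ)-1 := ⟨(m+1).toNat, by omega⟩
    rw [hn]
    have h := (beta_eq b c α β hc hαrec hβrec hα0 hα1 hβ0 hβ1 n).1
    rw [show ((n:ℤ)-1)+2 = (n:ℤ)+1 by ring]
    exact h
  have hbk : β k = ((rr b c (k-1) : ℕ):ℤ)*(((rr b c k : ℕ):ℤ)*(α k) - α (k-1)) + α k := by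
    rw [hbeta k (by omega)]
    have h2 := rec' b c α hαrec (k+1)
    rw [show k+1-1 = k by ring] at h2
    have h3 : rr b c (k+1) = rr b c (k-1) := by
      rw [show k+1 = (k-1)+2 by ring, rr_period]
    rw [h3] at h2
    rw [show k+2 = k+1+1 by ring, h2, hA1eq]
    ring
  have hbp : β (k-1) = ((rr b c k : ℕ):ℤ)*(α k) + α (k-1) := by
    rw [hbeta (k-1) (by omega), show k-1+2 = k+1 by ring, hA1eq]
    ring
  -- apply the main geometric lemma
  have hne' : ¬(pq.1 = α (k-1) ∧ pq.2 = 0) := by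
    rintro ⟨h1, h2⟩
    exact hne (Prod.ext h1 h2)
  have hmain := main_geom (rr b c (k-1)) (rr b c k) (α k) (α (k-1)) (α (k+1)) e pq.1 pq.2
    hBz hCz ha1 hap1 hA1eq hA1ineq hA2 he hinv hce hmem hne'
  refine ⟨(pq.1 + α (k+1), pq.2 + α k), ?_, ?_⟩
  · simp only [Set.mem_setOf_eq]
    rw [hbk, hbp]
    exact hmain
  · simp only [add_sub_cancel_right]
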